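/- For any ring R, the polynomial ring R[x] is central linear Armendariz if and only if the Laurent polynomial ring R[x, x⁻¹] is central linear Armendariz. -/

import Mathlib

open Polynomial

/-- A ring `R` is *central linear Armendariz* if whenever the product of two linear
polynomials `(a₀ + a₁x)(b₀ + b₁x) = 0` in `R[x]`, each product `aᵢbⱼ` is central in `R`. -/
def CentralLinearArmendariz (R : Type*) [Ring R] : Prop :=
  ∀ a₀ a₁ b₀ b₁ : R,
    (C a₀ + C a₁ * X) * (C b₀ + C b₁ * X) = 0 →
      a₀ * b₀ ∈ Set.center R ∧ a₀ * b₁ ∈ Set.center R ∧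
      a₁ * b₀ ∈ Set.center R ∧ a₁ * b₁ ∈ Set.center R

/-- A ring `R` is *linear Armendariz* if whenever the product of two linear
polynomials `(a₀ + a₁x)(b₀ + b₁x) = 0` in `R[x]`, each product `aᵢbⱼ` is zero. -/
def LinearArmendariz (R : Type*) [Ring R] : Prop :=
  ∀ a₀ a₁ b₀ b₁ : R,
    (C a₀ + C a₁ * X) * (C b₀ + C b₁ * X) = 0 →
      a₀ * b₀ = 0 ∧ a₀ * b₁ = 0 ∧ a₁ * b₀ = 0 ∧ a₁ * b₁ = 0

/-- A ring `R` is *Armendariz* if whenever `f g : R[x]` satisfy `f * g = 0`,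
every product of a coefficient of `f` with a coefficient of `g` is zero. -/
def Armendariz (R : Type*) [Ring R] : Prop :=
  ∀ f g : R[X], f * g = 0 → ∀ i j : ℕ, f.coeff i * g.coeff j = 0

/-!
`R[x]` is a subring of `R[x, x⁻¹]`, and every Laurent polynomial becomes a polynomial after
multiplication by a central unit `xⁿ`. Central linear Armendariz descends to subrings: if `f z`
is central in the larger ring, then `z` already commutes with the subring. It also ascends along
such a central localisation: clearing the denominators of `a₀, a₁` by a common `xⁿ` and those of
`b₀, b₁` by `xᵐ` turns a vanishing product over `R[x, x⁻¹]` into one over `R[x]`, and centrality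
of `aᵢ bⱼ xⁿ⁺ᵐ` forces centrality of `aᵢ bⱼ`, since `xⁿ⁺ᵐ` is a central unit.
-/

theorem mem_center_of_mul_mem_center {M : Type*} [Monoid M] {z u : M} (hu : IsUnit u)
    (hu_center : u ∈ Set.center M) (h : z * u ∈ Set.center M) : z ∈ Set.center M := by
  rw [Semigroup.mem_center_iff] at hu_center h ⊢
  intro g
  apply hu.mul_left_inj.mp
  calc g * z * u = z * u * g := by rw [mul_assoc, h g]
    _ = z * g * u := by rw [mul_assoc, ← hu_center g, mul_assoc]

theorem Polynomial.C_mem_center {B : Type*} [Semiring B] {c : B} (hc : c ∈ Set.center B) :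
    C c ∈ Set.center B[X] := by
  rw [Semigroup.mem_center_iff] at hc ⊢
  intro g
  ext n
  rw [coeff_mul_C, coeff_C_mul, hc]

section Semiring

variable {A B : Type*} [Semiring A] [Semiring B]

theorem Polynomial.map_linear_eq_mul_C (f : A →+* B) {p₀ p₁ : A} {a₀ a₁ u : B}
    (hp₀ : f p₀ = a₀ * u) (hp₁ : f p₁ = a₁ * u) :
    (C p₀ + C p₁ * X).map f = (C a₀ + C a₁ * X) * C u := by
  rw [Polynomial.map_add, Polynomial.map_mul, map_C, map_C, map_X, hp₀, hp₁, C_mul, C_mul,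
    add_mul, mul_assoc, mul_assoc, X_mul_C]

theorem RingHom.mem_center_of_map_mem_center {f : A →+* B} (hf : Function.Injective f) {z : A}
    (h : f z ∈ Set.center B) : z ∈ Set.center A := by
  rw [Semigroup.mem_center_iff] at h ⊢
  intro g
  apply hf
  rw [map_mul, map_mul, h]

/-- `B` is a ring of right fractions of `f(A)` whose denominators are central units. -/
def RingHom.HasCentralDenominators (f : A →+* B) : Prop :=
  ∀ b : B, ∃ a s : A, IsUnit (f s) ∧ f s ∈ Set.center B ∧ f a = b * f s

namespace RingHom.HasCentralDenominators

variable {f : A →+* B}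

theorem map_mem_center (hf : f.HasCentralDenominators) {z : A} (hz : z ∈ Set.center A) :
    f z ∈ Set.center B := by
  rw [Semigroup.mem_center_iff] at hz ⊢
  intro g
  obtain ⟨a, s, hs, -, ha⟩ := hf g
  apply hs.mul_left_inj.mp
  calc g * f z * f s = g * f s * f z := by rw [mul_assoc, ← map_mul, ← hz, map_mul, mul_assoc]
    _ = f z * (g * f s) := by rw [← ha, ← map_mul, ← map_mul, hz]
    _ = f z * g * f s := (mul_assoc _ _ _).symm

theorem exists_common_denominator (hf : f.HasCentralDenominators) (b₀ b₁ : B) :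
    ∃ a₀ a₁ s : A, IsUnit (f s) ∧ f s ∈ Set.center B ∧
      f a₀ = b₀ * f s ∧ f a₁ = b₁ * f s := by
  obtain ⟨a₀, s₀, hs₀, hs₀c, ha₀⟩ := hf b₀
  obtain ⟨a₁, s₁, hs₁, hs₁c, ha₁⟩ := hf b₁
  refine ⟨a₀ * s₁, a₁ * s₀, s₀ * s₁, ?_, ?_, ?_, ?_⟩
  · rw [map_mul]; exact hs₀.mul hs₁
  · rw [map_mul]; exact Set.mul_mem_center hs₀c hs₁c
  · rw [map_mul, map_mul, ha₀, mul_assoc]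
  · rw [map_mul, map_mul, ha₁, mul_assoc, Semigroup.mem_center_iff.mp hs₁c]

end RingHom.HasCentralDenominators

end Semiring

namespace CentralLinearArmendariz

variable {A B : Type*} [Ring A] [Ring B]

theorem of_injective (f : A →+* B) (hf : Function.Injective f)
    (hB : CentralLinearArmendariz B) : CentralLinearArmendariz A := by
  intro a₀ a₁ b₀ b₁ h
  have hmap := congrArg (Polynomial.map f) h
  rw [Polynomial.map_mul, Polynomial.map_zero,
    map_linear_eq_mul_C f (mul_one (f a₀)).symm (mul_one (f a₁)).symm,
    map_linear_eq_mul_C f (mul_one (f b₀)).symm (mul_one (f b₁)).symm,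
    C_1, mul_one, mul_one] at hmap
  obtain ⟨h₀₀, h₀₁, h₁₀, h₁₁⟩ := hB _ _ _ _ hmap
  simp only [← map_mul] at h₀₀ h₀₁ h₁₀ h₁₁
  exact ⟨f.mem_center_of_map_mem_center hf h₀₀, f.mem_center_of_map_mem_center hf h₀₁,
    f.mem_center_of_map_mem_center hf h₁₀, f.mem_center_of_map_mem_center hf h₁₁⟩

theorem of_hasCentralDenominators {f : A →+* B} (hf_inj : Function.Injective f)
    (hf : f.HasCentralDenominators) (hA : CentralLinearArmendariz A) :
    CentralLinearArmendariz B := by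
  intro a₀ a₁ b₀ b₁ h
  obtain ⟨p₀, p₁, s, hs, hs_center, hp₀, hp₁⟩ := hf.exists_common_denominator a₀ a₁
  obtain ⟨q₀, q₁, t, ht, ht_center, hq₀, hq₁⟩ := hf.exists_common_denominator b₀ b₁
  have hCs := Semigroup.mem_center_iff.mp (C_mem_center hs_center)
  have hpq : (C p₀ + C p₁ * X) * (C q₀ + C q₁ * X) = 0 := by
    apply map_injective f hf_inj
    rw [Polynomial.map_zero]
    calc ((C p₀ + C p₁ * X) * (C q₀ + C q₁ * X)).map f
        = (C a₀ + C a₁ * X) * C (f s) * ((C b₀ + C b₁ * X) * C (f t)) := by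
          rw [Polynomial.map_mul, map_linear_eq_mul_C f hp₀ hp₁, map_linear_eq_mul_C f hq₀ hq₁]
      _ = (C a₀ + C a₁ * X) * (C b₀ + C b₁ * X) * (C (f s) * C (f t)) := by
          rw [mul_assoc, ← mul_assoc (C (f s)), ← hCs, mul_assoc, ← mul_assoc]
      _ = 0 := by rw [h, zero_mul]
  have descend : ∀ {p q : A} {a b : B}, f p = a * f s → f q = b * f t →
      p * q ∈ Set.center A → a * b ∈ Set.center B := by
    intro p q a b hp hq hpq
    refine mem_center_of_mul_mem_center (hs.mul ht) (Set.mul_mem_center hs_center ht_center) ?_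
    have hpq_map : f (p * q) = a * b * (f s * f t) := by
      rw [map_mul, hp, hq, mul_assoc a, ← mul_assoc (f s),
        ← Semigroup.mem_center_iff.mp hs_center, mul_assoc, mul_assoc]
    exact hpq_map ▸ hf.map_mem_center hpq
  obtain ⟨h₀₀, h₀₁, h₁₀, h₁₁⟩ := hA _ _ _ _ hpq
  exact ⟨descend hp₀ hq₀ h₀₀, descend hp₀ hq₁ h₀₁, descend hp₁ hq₀ h₁₀, descend hp₁ hq₁ h₁₁⟩

end CentralLinearArmendariz

theorem Polynomial.toLaurent_hasCentralDenominators {R : Type*} [Semiring R] :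
    (toLaurent : R[X] →+* LaurentPolynomial R).HasCentralDenominators := by
  intro g
  obtain ⟨n, f, hf⟩ := g.exists_T_pow
  refine ⟨f, X ^ n, ?_, ?_, ?_⟩ <;> rw [toLaurent_X_pow]
  · exact LaurentPolynomial.isUnit_T _
  · exact Semigroup.mem_center_iff.mpr fun g => (LaurentPolynomial.commute_T _ g).eq.symm
  · exact hf

/-- For any ring `R`, the polynomial ring `R[x]` is central linear Armendariz iff
the Laurent polynomial ring `R[x, x⁻¹]` is central linear Armendariz. -/
theorem stmt_15 (R : Type*) [Ring R] :
    CentralLinearArmendariz (Polynomial R) ↔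
      CentralLinearArmendariz (LaurentPolynomial R) :=
  ⟨.of_hasCentralDenominators toLaurent_injective toLaurent_hasCentralDenominators,
    .of_injective toLaurent toLaurent_injective⟩
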